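/- Let Π be a dense nested sequence of partitions of [0,T] that exhausts the càdlàg path ω : [0,T] → ℝ, i.e. every jump time of ω belongs to ⋃_{n≥1} π^n. Suppose the functions A^n(t) := Σ_{i=0}^{m(n)−1} ( ω(t^n_{i+1} ∧ t) − ω(t^n_i ∧ t) )², t ∈ [0,T], converge uniformly on [0,T] to a function A as n → ∞ (Vovk's quadratic variation along Π). Then for every t ∈ [0,T] the sums Σ_{i : t^n_i ≤ t} ( ω(t^n_{i+1}) − ω(t^n_i) )² also converge to A(t) as n → ∞; in particular the two difference terms satisfy ( ω(t) − ω(t^n_{k̄(n,t)}) )² − ( ω(t^n_{k̄(n,t)+1}) − ω(t^n_{k̄(n,t)}) )² → 0, where k̄(n,t) := max{ i : t^n_i ≤ t }. -/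

import Mathlib

/-! For fixed `t`, let `k = k̄(n,t)`. The truncated sum `Aⁿ(t)` and the pointwise sum agree on
every interval of `πⁿ` except `[tⁿ_k, tⁿ_{k+1}]`, which straddles `t`, so they differ by
`(ω t - ω tⁿ_k)² - (ω tⁿ_{k+1} - ω tⁿ_k)² = (ω t - ω tⁿ_{k+1}) (ω t + ω tⁿ_{k+1} - 2 ω tⁿ_k)`.
As the mesh shrinks, `tⁿ_{k+1} ↓ t`, so the first factor tends to `0` by right-continuity, and
`tⁿ_k ↑ t`, so the second factor stays bounded because `ω` has a left limit at `t`. -/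

open Filter Topology Set

noncomputable section

/-- A sequence of partitions of `[0,T]`. -/
structure PartitionSeq (T : ℝ) where
  m : ℕ → ℕ
  t : ℕ → ℕ → ℝ
  m_pos : ∀ n, 0 < m n
  first : ∀ n, t n 0 = 0
  last : ∀ n, t n (m n) = T
  mono : ∀ n, ∀ i < m n, t n i < t n (i + 1)
  mesh : Tendsto (fun n => ⨆ i : Fin (m n), (t n (i + 1) - t n i)) atTop (nhds 0)

/-- `ω` is càdlàg on `[0,T]`: right-continuous with left limits. -/
def IsCadlagOn {E : Type*} [TopologicalSpace E] (ω : ℝ → E) (T : ℝ) : Prop :=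
  (∀ s ∈ Ico (0:ℝ) T, ContinuousWithinAt ω (Ici s) s) ∧
  (∀ s ∈ Ioc (0:ℝ) T, ∃ l : E, Tendsto ω (nhdsWithin s (Iio s)) (nhds l))

open Classical in
/-- `k̄(n,t) = max { i ∈ {0,…,m(n)-1} : tⁿ_i ≤ t }`. -/
def kbar (T : ℝ) (P : PartitionSeq T) (n : ℕ) (s : ℝ) : ℕ :=
  Nat.findGreatest (fun i => P.t n i ≤ s) (P.m n - 1)

namespace PartitionSeq

variable {T : ℝ} (P : PartitionSeq T) (n : ℕ)

theorem t_le_t {i j : ℕ} (hij : i ≤ j) (hj : j ≤ P.m n) : P.t n i ≤ P.t n j :=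
  (strictMonoOn_Iic_of_lt_succ (P.mono n)).monotoneOn (hij.trans hj) hj hij

def meshSize : ℝ := ⨆ i : Fin (P.m n), (P.t n (i + 1) - P.t n i)

theorem t_succ_sub_t_le_meshSize {i : ℕ} (hi : i < P.m n) :
    P.t n (i + 1) - P.t n i ≤ P.meshSize n :=
  le_ciSup (f := fun j : Fin (P.m n) => P.t n (j + 1) - P.t n j)
    (Set.finite_range _).bddAbove ⟨i, hi⟩

theorem tendsto_meshSize : Tendsto P.meshSize atTop (𝓝 0) := P.mesh

theorem t_mem_Icc {i : ℕ} (hi : i ≤ P.m n) : P.t n i ∈ Icc 0 T := by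
  constructor
  · simpa only [P.first] using P.t_le_t n (Nat.zero_le i) hi
  · simpa only [P.last] using P.t_le_t n hi le_rfl

end PartitionSeq

section kbar

variable {T : ℝ} (P : PartitionSeq T) (n : ℕ) {s : ℝ}

theorem kbar_lt : kbar T P n s < P.m n :=
  (Nat.findGreatest_le _).trans_lt (Nat.sub_lt (P.m_pos n) one_pos)

theorem t_kbar_le (hs : 0 ≤ s) : P.t n (kbar T P n s) ≤ s := by
  classical
  exact Nat.findGreatest_spec (P := fun i => P.t n i ≤ s) (Nat.zero_le _) (by simpa [P.first])

theorem lt_t_of_kbar_lt {i : ℕ} (hki : kbar T P n s < i) (hi : i < P.m n) : s < P.t n i := by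
  classical
  exact not_le.1 (Nat.findGreatest_is_greatest hki (Nat.le_sub_one_of_lt hi))

theorem le_t_kbar_succ (hsT : s ≤ T) : s ≤ P.t n (kbar T P n s + 1) := by
  rcases (show kbar T P n s + 1 ≤ P.m n from kbar_lt P n).lt_or_eq with hlt | heq
  · exact (lt_t_of_kbar_lt P n (Nat.lt_succ_self _) hlt).le
  · rwa [heq, P.last]

theorem tendsto_t_kbar (hs : s ∈ Icc 0 T) :
    Tendsto (fun n => P.t n (kbar T P n s)) atTop (𝓝[Icc 0 s] s) := by
  refine tendsto_nhdsWithin_of_tendsto_nhds_of_eventually_within _ ?_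
    (.of_forall fun n => ⟨(P.t_mem_Icc n (kbar_lt P n).le).1, t_kbar_le P n hs.1⟩)
  refine tendsto_of_tendsto_of_tendsto_of_le_of_le (g := fun n => s - P.meshSize n) ?_
    tendsto_const_nhds (fun n => ?_) (fun n => t_kbar_le P n hs.1)
  · simpa using tendsto_const_nhds.sub P.tendsto_meshSize
  · have := P.t_succ_sub_t_le_meshSize n (kbar_lt (s := s) P n)
    have := le_t_kbar_succ P n hs.2
    dsimp only
    linarith

theorem tendsto_t_kbar_succ (hs : s ∈ Icc 0 T) :
    Tendsto (fun n => P.t n (kbar T P n s + 1)) atTop (𝓝[Icc s T] s) := by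
  refine tendsto_nhdsWithin_of_tendsto_nhds_of_eventually_within _ ?_
    (.of_forall fun n => ⟨le_t_kbar_succ P n hs.2, (P.t_mem_Icc n (kbar_lt P n)).2⟩)
  refine tendsto_of_tendsto_of_tendsto_of_le_of_le (h := fun n => s + P.meshSize n)
    tendsto_const_nhds ?_ (fun n => le_t_kbar_succ P n hs.2) (fun n => ?_)
  · simpa using tendsto_const_nhds.add P.tendsto_meshSize
  · have := P.t_succ_sub_t_le_meshSize n (kbar_lt (s := s) P n)
    have := t_kbar_le P n hs.1
    dsimp only
    linarith

theorem sum_sq_min_eq (ω : ℝ → ℝ) (hs : s ∈ Icc 0 T) :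
    ∑ i ∈ Finset.range (P.m n), (ω (min (P.t n (i + 1)) s) - ω (min (P.t n i) s)) ^ 2 =
      (∑ i ∈ Finset.range (P.m n),
        if P.t n i ≤ s then (ω (P.t n (i + 1)) - ω (P.t n i)) ^ 2 else 0) +
      ((ω s - ω (P.t n (kbar T P n s))) ^ 2
        - (ω (P.t n (kbar T P n s + 1)) - ω (P.t n (kbar T P n s))) ^ 2) := by
  set k := kbar T P n s
  have hk : P.t n k ≤ s := t_kbar_le P n hs.1
  have hk1 : s ≤ P.t n (k + 1) := le_t_kbar_succ P n hs.2
  rw [← sub_eq_iff_eq_add', ← Finset.sum_sub_distrib,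
    Finset.sum_eq_single_of_mem k (Finset.mem_range.2 (kbar_lt P n))]
  · rw [if_pos hk, min_eq_left hk, min_eq_right hk1]
  · intro i hi hik
    have hi : i < P.m n := Finset.mem_range.1 hi
    rcases hik.lt_or_gt with hlt | hgt
    · have hi1 : P.t n (i + 1) ≤ s := (P.t_le_t n hlt (kbar_lt P n).le).trans hk
      have hi0 : P.t n i ≤ s := (P.mono n i hi).le.trans hi1
      rw [if_pos hi0, min_eq_left hi1, min_eq_left hi0, sub_self]
    · have hi0 : s < P.t n i := lt_t_of_kbar_lt P n hgt hi
      rw [if_neg hi0.not_ge, min_eq_right (hi0.trans (P.mono n i hi)).le, min_eq_right hi0.le]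
      simp

end kbar

theorem tendsto_sq_sub_sub_sq_sub {ι : Type*} {l : Filter ι} {a : ℝ} {b c : ι → ℝ}
    (hb : Tendsto b l (𝓝 a)) (hc : IsBoundedUnder (· ≤ ·) l (norm ∘ c)) :
    Tendsto (fun i => (a - c i) ^ 2 - (b i - c i) ^ 2) l (𝓝 0) := by
  have hab : Tendsto (fun i => a - b i) l (𝓝 0) := by
    simpa using (tendsto_const_nhds (x := a)).sub hb
  have h₁ : Tendsto (fun i => (a - b i) * (a + b i)) l (𝓝 0) := by
    simpa using hab.mul (tendsto_const_nhds.add hb)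
  have h₂ : Tendsto (fun i => 2 * ((a - b i) * c i)) l (𝓝 0) := by
    simpa using (hab.zero_mul_isBoundedUnder_le hc).const_mul 2
  simpa using (h₁.sub h₂).congr fun i => by ring

namespace IsCadlagOn

variable {T t : ℝ}

theorem continuousWithinAt_Icc {E : Type*} [TopologicalSpace E] {ω : ℝ → E}
    (hω : IsCadlagOn ω T) (ht : t ∈ Icc 0 T) : ContinuousWithinAt ω (Icc t T) t := by
  rcases ht.2.lt_or_eq with htT | rfl
  · exact (hω.1 t ⟨ht.1, htT⟩).mono Icc_subset_Ici_self
  · simpa only [Icc_self] using continuousWithinAt_singleton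

theorem isBoundedUnder_norm {E : Type*} [SeminormedAddCommGroup E] {ω : ℝ → E}
    (hω : IsCadlagOn ω T) (ht : t ∈ Icc 0 T) :
    IsBoundedUnder (· ≤ ·) (𝓝[Icc 0 t] t) (norm ∘ ω) := by
  rw [← Ico_union_right ht.1, nhdsWithin_union, nhdsWithin_singleton]
  unfold IsBoundedUnder
  rw [Filter.map_sup]
  refine isBounded_sup ?_ ⟨‖ω t‖, by simp⟩
  rcases ht.1.lt_or_eq with ht0 | rfl
  · obtain ⟨l, hl⟩ := hω.2 t ⟨ht0, ht.2⟩
    exact (hl.norm.isBoundedUnder_le).mono (nhdsWithin_mono _ Ico_subset_Iio_self)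
  · simpa using isBounded_bot.2 inferInstance

end IsCadlagOn

theorem vovk_qv_implies_pointwise_qv_general
    (T : ℝ) (P : PartitionSeq T)
    (ω : ℝ → ℝ) (hω : IsCadlagOn ω T)
    -- Vovk's quadratic variation: uniform convergence of the truncated quadratic sums
    (A : ℝ → ℝ)
    (hunif : TendstoUniformlyOn
      (fun n t => ∑ i ∈ Finset.range (P.m n),
        (ω (min (P.t n (i + 1)) t) - ω (min (P.t n i) t))^2)
      A atTop (Icc 0 T)) :
    ∀ t ∈ Icc (0:ℝ) T,
      Tendsto (fun n => ∑ i ∈ Finset.range (P.m n),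
        if P.t n i ≤ t then (ω (P.t n (i + 1)) - ω (P.t n i))^2 else 0) atTop
        (nhds (A t)) ∧
      Tendsto (fun n =>
        (ω t - ω (P.t n (kbar T P n t)))^2
          - (ω (P.t n (kbar T P n t + 1)) - ω (P.t n (kbar T P n t)))^2) atTop
        (nhds 0) := by
  intro t ht
  have hD := tendsto_sq_sub_sub_sq_sub (b := fun n => ω (P.t n (kbar T P n t + 1)))
    (c := fun n => ω (P.t n (kbar T P n t)))
    ((hω.continuousWithinAt_Icc ht).tendsto.comp (tendsto_t_kbar_succ P ht))
    ((tendsto_t_kbar P ht).isBoundedUnder_comp (hω.isBoundedUnder_norm ht))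
  refine ⟨?_, hD⟩
  simpa [sum_sq_min_eq P _ ω ht] using (hunif.tendsto_at ht).sub hD

/-- **From Vovk's quadratic variation to the pointwise quadratic variation.**
If `Π` is dense and nested and exhausts the jump times of the càdlàg path `ω`, and the
truncated quadratic sums `Aⁿ` converge uniformly on `[0,T]` to `A`, then for every `t` the
sums `Σ_{tⁿ_i ≤ t} (ω(tⁿ_{i+1}) - ω(tⁿ_i))²` also converge to `A(t)`, and the two difference
terms tend to `0`. -/
theorem vovk_qv_implies_pointwise_qv
    (T : ℝ) (hT : 0 < T) (P : PartitionSeq T)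
    (hnested : ∀ n : ℕ, ∀ i ≤ P.m n, ∃ j ≤ P.m (n + 1), P.t (n + 1) j = P.t n i)
    (ω : ℝ → ℝ) (hω : IsCadlagOn ω T)
    -- `Π` exhausts `ω`: every jump time of `ω` belongs to `⋃ₙ πⁿ`
    (hexhaust : ∀ s ∈ Ioc (0:ℝ) T, ω s ≠ Function.leftLim ω s →
      ∃ n : ℕ, ∃ i ≤ P.m n, P.t n i = s)
    -- Vovk's quadratic variation: uniform convergence of the truncated quadratic sums
    (A : ℝ → ℝ)
    (hunif : TendstoUniformlyOn
      (fun n t => ∑ i ∈ Finset.range (P.m n),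
        (ω (min (P.t n (i + 1)) t) - ω (min (P.t n i) t))^2)
      A atTop (Icc 0 T)) :
    ∀ t ∈ Icc (0:ℝ) T,
      Tendsto (fun n => ∑ i ∈ Finset.range (P.m n),
        if P.t n i ≤ t then (ω (P.t n (i + 1)) - ω (P.t n i))^2 else 0) atTop
        (nhds (A t)) ∧
      Tendsto (fun n =>
        (ω t - ω (P.t n (kbar T P n t)))^2
          - (ω (P.t n (kbar T P n t + 1)) - ω (P.t n (kbar T P n t)))^2) atTop
        (nhds 0) :=
  vovk_qv_implies_pointwise_qv_general T P ω hω A hunif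

end
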